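/- Let G be a finite group and H₁, H₂ Gassmann equivalent subgroups of G. Then for every cyclic subgroup C of G, the coset types of (G,H₁,C) and (G,H₂,C) coincide: for every natural number k, the number of double cosets d in H₁\G/C whose cardinality (as a subset of G) equals k·|H₁| is the same as the number of double cosets d in H₂\G/C whose cardinality equals k·|H₂|. (Note that Gassmann equivalence forces |H₁| = |H₂|.) -/

import Mathlib

/-!
A coset `xH` is fixed by `g` iff `x⁻¹gx ∈ H`, and there are `|Z_G(g)| · |H ∩ g^G|` such `x`.
As Gassmann equivalent subgroups also have the same order (sum over conjugacy classes), every
`g ∈ G` has as many fixed points on `G ⧸ H₁` as on `G ⧸ H₂`. Inversion identifies `H\G/C` with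
the set of `C`-orbits on `G ⧸ H`, the double coset `HxC` having `|H|` times as many elements as
the orbit of `x⁻¹H`. For `C = ⟨g⟩`, Möbius inversion recovers the number of points of
`g`-period `n` from the fixed-point counts of the powers `gᵐ` with `m ∣ n`, and dividing by `n`
gives the number of `C`-orbits of size `n`.
-/

/-- Two subgroups `H₁`, `H₂` of a group `G` are *Gassmann equivalent* in `G` if every
conjugacy class of `G` meets `H₁` and `H₂` in the same number of elements. -/
def Subgroup.IsGassmannEquivalent {G : Type*} [Group G] (H₁ H₂ : Subgroup G) : Prop :=
  ∀ g : G, Nat.card {h : G // h ∈ H₁ ∧ IsConj g h} = Nat.card {h : G // h ∈ H₂ ∧ IsConj g h}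

open MulAction

theorem Nat.eq_of_sum_divisors_eq {f g : ℕ → ℕ}
    (h : ∀ n > 0, ∑ d ∈ n.divisors, f d = ∑ d ∈ n.divisors, g d) {n : ℕ} (hn : 0 < n) :
    f n = g n := by
  let F : ℕ → ℤ := fun n => ∑ d ∈ n.divisors, (f d : ℤ)
  have hf := ArithmeticFunction.sum_eq_iff_sum_smul_moebius_eq (f := fun n => (f n : ℤ)) (g := F)
    |>.mp (fun _ _ => rfl) n hn
  have hg := ArithmeticFunction.sum_eq_iff_sum_smul_moebius_eq (f := fun n => (g n : ℤ)) (g := F)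
    |>.mp (fun n hn => by simp only [F]; exact_mod_cast (h n hn).symm) n hn
  exact_mod_cast hf.symm.trans hg

namespace MulAction

variable {G X : Type*} [Group G] [MulAction G X]

theorem card_smul_mem (x : X) (s : Set X) :
    Nat.card {a : G // a • x ∈ s} =
      Nat.card (stabilizer G x) * Nat.card {y : orbit G x // (y : X) ∈ s} := by
  let t : Set (G ⧸ stabilizer G x) := {q | ((orbitEquivQuotientStabilizer G x).symm q : X) ∈ s}
  calc Nat.card {a : G // a • x ∈ s} = Nat.card (QuotientGroup.mk ⁻¹' t) := rfl
    _ = Nat.card (stabilizer G x) * Nat.card t := QuotientGroup.card_preimage_mk _ t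
    _ = _ := congrArg _ <| Nat.card_congr <|
      (orbitEquivQuotientStabilizer G x).symm.subtypeEquiv fun _ => Iff.rfl

theorem card_orbit_zpowers (g : G) (x : X) :
    Nat.card (orbit (Subgroup.zpowers g) x) = period g x := by
  rw [Nat.card_congr (orbitZPowersEquiv g x), Nat.card_zmod, period_eq_minimalPeriod]

variable [Finite X]

theorem card_orbitRel_quotient_orbit_ne_zero (ω : orbitRel.Quotient G X) :
    Nat.card ω.orbit ≠ 0 :=
  have := ω.nonempty_orbit.to_subtype
  Nat.card_pos.ne'

theorem card_fixedBy_pow_eq_sum_card_period (g : G) {n : ℕ} (hn : n ≠ 0) :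
    Nat.card (fixedBy X (g ^ n)) = ∑ d ∈ n.divisors, Nat.card {x : X // period g x = d} := by
  classical
  have := Fintype.ofFinite X
  have hfix : Nat.card (fixedBy X (g ^ n)) =
      (Finset.univ.filter fun x : X => period g x ∣ n).card := by
    rw [← Fintype.card_subtype, ← Nat.card_eq_fintype_card]
    exact Nat.card_congr (Equiv.subtypeEquivRight fun _ => pow_smul_eq_iff_period_dvd)
  rw [hfix, Finset.card_eq_sum_card_fiberwise (f := period g) (t := n.divisors)
    fun x hx => Nat.mem_divisors.mpr ⟨(Finset.mem_filter.mp hx).2, hn⟩]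
  refine Finset.sum_congr rfl fun d hd => ?_
  rw [Finset.filter_filter, Nat.card_eq_fintype_card, Fintype.card_subtype]
  congr 1
  exact Finset.filter_congr fun x _ => and_iff_right_of_imp fun h => h ▸ Nat.dvd_of_mem_divisors hd

theorem card_orbitRel_quotient_mul (k : ℕ) :
    Nat.card {ω : orbitRel.Quotient G X // Nat.card ω.orbit = k} * k =
      Nat.card {x : X // Nat.card (orbit G x) = k} := by
  classical
  have := Fintype.ofFinite {ω : orbitRel.Quotient G X // Nat.card ω.orbit = k}
  rw [← Nat.card_congr (Equiv.sigmaSubtypeFiberEquivSubtype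
    (Quotient.mk'' : X → orbitRel.Quotient G X) (p := fun x => Nat.card (orbit G x) = k)
    (q := fun ω : orbitRel.Quotient G X => Nat.card ω.orbit = k) fun x => Iff.rfl), Nat.card_sigma]
  have hfiber (ω : {ω : orbitRel.Quotient G X // Nat.card ω.orbit = k}) :
      Nat.card {x : X // Quotient.mk'' x = ω.1} = k :=
    (Nat.card_congr (Equiv.subtypeEquivRight fun _ => orbitRel.Quotient.mem_orbit.symm)).trans ω.2
  rw [Finset.sum_congr rfl fun ω _ => hfiber ω, Finset.sum_const, Finset.card_univ,
    smul_eq_mul, Nat.card_eq_fintype_card]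

theorem card_orbitRel_quotient_zpowers_eq_of_card_fixedBy_eq {Y : Type*} [MulAction G Y]
    [Finite Y] (g : G) (h : ∀ n : ℕ, Nat.card (fixedBy X (g ^ n)) = Nat.card (fixedBy Y (g ^ n)))
    (k : ℕ) :
    Nat.card {ω : orbitRel.Quotient (Subgroup.zpowers g) X // Nat.card ω.orbit = k} =
      Nat.card {ω : orbitRel.Quotient (Subgroup.zpowers g) Y // Nat.card ω.orbit = k} := by
  rcases k.eq_zero_or_pos with rfl | hk
  · simp only [card_orbitRel_quotient_orbit_ne_zero, Nat.card_of_isEmpty]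
  have hperiod : Nat.card {x : X // period g x = k} = Nat.card {y : Y // period g y = k} :=
    Nat.eq_of_sum_divisors_eq (f := fun d => Nat.card {x : X // period g x = d})
      (g := fun d => Nat.card {y : Y // period g y = d}) (fun n hn => by
      rw [← card_fixedBy_pow_eq_sum_card_period (X := X) g hn.ne', h,
        card_fixedBy_pow_eq_sum_card_period (X := Y) g hn.ne']) hk
  apply Nat.eq_of_mul_eq_mul_right hk
  simp only [card_orbitRel_quotient_mul, card_orbit_zpowers, hperiod]

end MulAction

namespace Subgroup

variable {G : Type*} [Group G]

theorem mk_mem_fixedBy_iff (H : Subgroup G) (g x : G) :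
    (x : G ⧸ H) ∈ fixedBy (G ⧸ H) g ↔ x⁻¹ * g * x ∈ H := by
  rw [mem_fixedBy, Quotient.smul_coe, smul_eq_mul, QuotientGroup.eq, ← inv_mem_iff]
  group

theorem card_fixedBy_quotient_mul_card (H : Subgroup G) (g : G) :
    Nat.card (fixedBy (G ⧸ H) g) * Nat.card H =
      Nat.card (stabilizer (ConjAct G) g) * Nat.card {h : G // h ∈ H ∧ IsConj g h} := by
  calc Nat.card (fixedBy (G ⧸ H) g) * Nat.card H
      = Nat.card (QuotientGroup.mk ⁻¹' fixedBy (G ⧸ H) g) := by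
        rw [mul_comm, QuotientGroup.card_preimage_mk]
    _ = Nat.card {a : ConjAct G // a • g ∈ (H : Set G)} :=
        Nat.card_congr <| (Equiv.inv G).trans ConjAct.toConjAct.toEquiv |>.subtypeEquiv fun x => by
          rw [Set.mem_preimage, mk_mem_fixedBy_iff]
          simp [ConjAct.smul_def]
    _ = _ := by
      rw [card_smul_mem]
      refine congrArg _ (Nat.card_congr ((Equiv.subtypeSubtypeEquivSubtypeInter _ _).trans
        (Equiv.subtypeEquivRight fun h => ?_)))
      rw [ConjAct.mem_orbit_conjAct, isConj_comm, and_comm]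
      rfl

variable [Finite G] {H₁ H₂ : Subgroup G}

theorem IsGassmannEquivalent.card_eq (h : H₁.IsGassmannEquivalent H₂) :
    Nat.card H₁ = Nat.card H₂ := by
  classical
  have := Fintype.ofFinite G
  have card_eq_sum (H : Subgroup G) :
      Nat.card H = ∑ c : ConjClasses G, Nat.card {x : H // ConjClasses.mk (x : G) = c} := by
    rw [← Nat.card_sigma, Nat.card_congr (Equiv.sigmaFiberEquiv _)]
  rw [card_eq_sum, card_eq_sum]
  refine Finset.sum_congr rfl fun c _ => ?_
  obtain ⟨g, rfl⟩ := ConjClasses.mk_surjective c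
  convert h g using 1 <;>
    exact Nat.card_congr ((Equiv.subtypeSubtypeEquivSubtypeInter (· ∈ _)
      (ConjClasses.mk · = ConjClasses.mk g)).trans
      (Equiv.subtypeEquivRight fun x => by rw [ConjClasses.mk_eq_mk_iff_isConj, isConj_comm]))

theorem IsGassmannEquivalent.card_fixedBy_eq (h : H₁.IsGassmannEquivalent H₂) (g : G) :
    Nat.card (fixedBy (G ⧸ H₁) g) = Nat.card (fixedBy (G ⧸ H₂) g) := by
  have key := card_fixedBy_quotient_mul_card H₁ g
  rw [h g, ← card_fixedBy_quotient_mul_card H₂ g, h.card_eq] at key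
  exact Nat.eq_of_mul_eq_mul_right Nat.card_pos key

end Subgroup

namespace DoubleCoset

variable {G : Type*} [Group G] (H K : Subgroup G)

theorem mk_eq_mk_iff_orbitRel (x y : G) :
    mk H K x = mk H K y ↔
      (Quotient.mk'' ((x⁻¹ : G) : G ⧸ H) : orbitRel.Quotient K (G ⧸ H)) =
        (Quotient.mk'' ((y⁻¹ : G) : G ⧸ H) : orbitRel.Quotient K (G ⧸ H)) := by
  rw [DoubleCoset.eq, Quotient.eq'', orbitRel_apply, mem_orbit_iff]
  constructor
  · rintro ⟨h, hh, k, hk, rfl⟩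
    refine ⟨⟨k, hk⟩, QuotientGroup.eq.mpr ?_⟩
    simpa [mul_assoc] using inv_mem hh
  · rintro ⟨⟨k, hk⟩, hkx⟩
    refine ⟨y * k⁻¹ * x⁻¹, ?_, k, hk, by group⟩
    simpa [Subgroup.smul_def, mul_assoc] using QuotientGroup.eq.mp hkx

noncomputable def quotientEquivOrbitRelQuotient :
    DoubleCoset.Quotient (H : Set G) K ≃ orbitRel.Quotient K (G ⧸ H) :=
  (Quotient.congrRight fun x y => Quotient.eq.symm.trans (mk_eq_mk_iff_orbitRel H K x y)).trans
    (Setoid.quotientKerEquivOfSurjective _ fun ω => by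
      obtain ⟨y, rfl⟩ := Quotient.mk''_surjective ω
      obtain ⟨x, rfl⟩ := QuotientGroup.mk_surjective y
      exact ⟨x⁻¹, by rw [inv_inv]⟩)

theorem quotientEquivOrbitRelQuotient_mk (x : G) :
    quotientEquivOrbitRelQuotient H K (mk H K x) =
      (Quotient.mk'' ((x⁻¹ : G) : G ⧸ H) : orbitRel.Quotient K (G ⧸ H)) :=
  rfl

theorem inv_quotToDoubleCoset (d : DoubleCoset.Quotient (H : Set G) K) :
    (quotToDoubleCoset H K d)⁻¹ =
      QuotientGroup.mk ⁻¹' (quotientEquivOrbitRelQuotient H K d).orbit := by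
  ext a
  rw [Set.mem_inv, mem_quotToDoubleCoset_iff, Set.mem_preimage, orbitRel.Quotient.mem_orbit,
    ← (quotientEquivOrbitRelQuotient H K).apply_eq_iff_eq, quotientEquivOrbitRelQuotient_mk,
    inv_inv]

theorem card_quotToDoubleCoset (d : DoubleCoset.Quotient (H : Set G) K) :
    Nat.card (quotToDoubleCoset H K d) =
      Nat.card H * Nat.card (quotientEquivOrbitRelQuotient H K d).orbit := by
  rw [← Set.natCard_inv, inv_quotToDoubleCoset, QuotientGroup.card_preimage_mk]

theorem card_quotient_card_quotToDoubleCoset_eq_mul [Finite H] (k : ℕ) :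
    Nat.card {d : DoubleCoset.Quotient (H : Set G) K //
        Nat.card (quotToDoubleCoset H K d) = k * Nat.card H} =
      Nat.card {ω : orbitRel.Quotient K (G ⧸ H) // Nat.card ω.orbit = k} :=
  Nat.card_congr <| (quotientEquivOrbitRelQuotient H K).subtypeEquiv fun d => by
    rw [card_quotToDoubleCoset, mul_comm, Nat.mul_left_inj Nat.card_pos.ne']

end DoubleCoset

/-- (Gassmann) If `H₁` and `H₂` are Gassmann equivalent subgroups of a finite group `G`,
then for every cyclic subgroup `C` of `G` the coset types of `(G,H₁,C)` and `(G,H₂,C)`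
coincide: for every `k`, the number of double cosets in `H₁\G/C` of cardinality `k·|H₁|`
equals the number of double cosets in `H₂\G/C` of cardinality `k·|H₂|`. -/
theorem coset_types_eq_of_gassmann (G : Type*) [Group G] [Finite G]
    (H₁ H₂ : Subgroup G) (h : H₁.IsGassmannEquivalent H₂)
    (C : Subgroup G) (hC : IsCyclic C) (k : ℕ) :
    Nat.card {d : DoubleCoset.Quotient (H₁ : Set G) (C : Set G) //
        Nat.card (DoubleCoset.quotToDoubleCoset H₁ C d) = k * Nat.card H₁} =
      Nat.card {d : DoubleCoset.Quotient (H₂ : Set G) (C : Set G) //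
        Nat.card (DoubleCoset.quotToDoubleCoset H₂ C d) = k * Nat.card H₂} := by
  obtain ⟨g, rfl⟩ := C.isCyclic_iff_exists_zpowers_eq_top.mp hC
  rw [DoubleCoset.card_quotient_card_quotToDoubleCoset_eq_mul,
    DoubleCoset.card_quotient_card_quotToDoubleCoset_eq_mul]
  exact card_orbitRel_quotient_zpowers_eq_of_card_fixedBy_eq g (fun n => h.card_fixedBy_eq _) k
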